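/- arXiv:1406.2188 — 2 statements merged into one kernel-verified Lean document; each statement's English description precedes it below -/
import Mathlib

section
/- Partial sums under sorting: let u = X^α and v = X^β be monomials of the same degree with sort(u,v) = (X^{α'}, X^{β'}), and let i_1 < ... < i_{2t} enumerate {i : α_i+β_i odd}. Then for each index i: if i > i_{2t}, i ≤ i_1, or i_{2r} < i ≤ i_{2r+1} for some r, then Σ_{k≥i} α'_k = Σ_{k≥i} β'_k = Σ_{k≥i} (α_k+β_k)/2; and if i_{2r-1} < i ≤ i_{2r} for some r, then Σ_{k≥i} α'_k = -1/2 + Σ_{k≥i} (α_k+β_k)/2 and Σ_{k≥i} β'_k = 1/2 + Σ_{k≥i} (α_k+β_k)/2. -/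
/-!
Write the product `uv` as the weakly increasing list `L` of its variable indices; it has even
length `2p`. The factors with index `≥ i` form a suffix of `L` whose length
`m = Σ_{k≥i} (α_k + β_k)` has the same parity as the number of odd `α_j + β_j` with `j ≥ i`.
A suffix of an even-length list has `⌊m/2⌋` entries at even positions (the factors of `α'`)
and `⌈m/2⌉` at odd positions (the factors of `β'`).
-/

/-- Monomials as multisets of variable indices (smaller index = larger variable). -/
def stdList (m : Multiset ℕ) : List ℕ := m.sort (· ≤ ·)

def evens (l : List ℕ) : List ℕ := ((l.zipIdx.map Prod.swap).filter fun p => p.1 % 2 == 0).map Prod.snd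

def odds (l : List ℕ) : List ℕ := ((l.zipIdx.map Prod.swap).filter fun p => p.1 % 2 == 1).map Prod.snd

/-- `sort(u,v) = (Y_1Y_3⋯Y_{2p-1}, Y_2Y_4⋯Y_{2p})` where `uv = Y_1⋯Y_{2p}` is the
standard (weakly decreasing) factorization. -/
def sortPair (u v : Multiset ℕ) : Multiset ℕ × Multiset ℕ :=
  (((evens (stdList (u + v)) : List ℕ) : Multiset ℕ),
   ((odds (stdList (u + v)) : List ℕ) : Multiset ℕ))

/-- The monomial `X^α` as a multiset of variable indices. -/
def toMul {n : ℕ} (α : Fin n → ℕ) : Multiset ℕ :=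
  Finset.univ.val.bind fun i : Fin n => Multiset.replicate (α i) (i : ℕ)

lemma evens_cons (a : ℕ) (l : List ℕ) : evens (a :: l) = a :: odds l := by
  have shift (m : ℕ) : ((m + 1) % 2 == 0) = (m % 2 == 1) := by simp [beq_eq_decide]; omega
  simp [evens, odds, List.zipIdx_succ, List.filter_map, Function.comp_def, shift]

lemma odds_cons (a : ℕ) (l : List ℕ) : odds (a :: l) = evens l := by
  have shift (m : ℕ) : ((m + 1) % 2 == 1) = (m % 2 == 0) := by simp [beq_eq_decide]; omega
  simp [evens, odds, List.zipIdx_succ, List.filter_map, Function.comp_def, shift]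

lemma countP_evens_odds_of_pairwise_le (c : ℕ) :
    ∀ {L : List ℕ}, L.Pairwise (· ≤ ·) → Even L.length →
      (evens L).countP (c ≤ ·) = L.countP (c ≤ ·) / 2 ∧
      (odds L).countP (c ≤ ·) = (L.countP (c ≤ ·) + 1) / 2
  | [], _, _ => by simp [evens, odds]
  | [_], _, hev => by simp at hev
  | a :: b :: L, hsorted, hev => by
    obtain ⟨ha, hb, hL⟩ : (∀ x ∈ b :: L, a ≤ x) ∧ (∀ x ∈ L, b ≤ x) ∧ L.Pairwise (· ≤ ·) := by
      simpa using hsorted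
    have hevL : Even L.length := by simpa [Nat.even_add_one] using hev
    obtain ⟨ih_evens, ih_odds⟩ := countP_evens_odds_of_pairwise_le c hL hevL
    simp only [evens_cons, odds_cons, List.countP_cons]
    by_cases hca : c ≤ a
    · have hcb : c ≤ b := hca.trans (ha b List.mem_cons_self)
      simp only [hca, hcb, decide_true, if_true]
      omega
    by_cases hcb : c ≤ b
    · -- the suffix of entries `≥ c` is `b :: L`, of odd length
      have hall : L.countP (c ≤ ·) = L.length :=
        List.countP_eq_length.mpr fun x hx => by simpa using hcb.trans (hb x hx)
      obtain ⟨t, ht⟩ := hevL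
      simp only [hca, hcb, decide_true, decide_false, if_true, Bool.false_eq_true, if_false]
      omega
    · simpa [hca, hcb] using ⟨ih_evens, ih_odds⟩

lemma countP_toMul {n : ℕ} (p : ℕ → Prop) [DecidablePred p] (γ : Fin n → ℕ) :
    (toMul γ).countP p = ∑ k ∈ Finset.univ.filter (fun k : Fin n => p k), γ k := by
  rw [Finset.sum_filter, toMul, Multiset.countP_eq_card_filter, Multiset.filter_bind,
    Multiset.card_bind]
  refine Finset.sum_congr rfl fun k _ => ?_
  rw [Function.comp_apply, ← Multiset.countP_eq_card_filter, ← Multiset.coe_replicate,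
    Multiset.coe_countP, List.countP_replicate]
  simp

lemma card_toMul {n : ℕ} (γ : Fin n → ℕ) : (toMul γ).card = ∑ k, γ k := by
  simpa using countP_toMul (fun _ => True) γ

/-- partial sums under sorting.  Let `sort(X^α, X^β) = (X^{α'}, X^{β'})`
and `i_1 < ⋯ < i_{2t}` enumerate `J = {i : α_i + β_i odd}`.  For an index `i`, the
condition "`i > i_{2t}`, `i ≤ i_1`, or `i_{2r} < i ≤ i_{2r+1}`" is exactly that the
tail count `#{j ∈ J : j ≥ i}` is even, and in that case
`Σ_{k≥i} α'_k = Σ_{k≥i} β'_k = Σ_{k≥i}(α_k+β_k)/2`; the condition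
"`i_{2r-1} < i ≤ i_{2r}`" is exactly that the tail count is odd, and in that case
`Σ_{k≥i} α'_k = -1/2 + Σ_{k≥i}(α_k+β_k)/2` and `Σ_{k≥i} β'_k = 1/2 + Σ_{k≥i}(α_k+β_k)/2`
(stated integrally by doubling). -/
theorem sortPair_partial_sums {n : ℕ} (α β α' β' : Fin n → ℕ)
    (h : ∑ i, α i = ∑ i, β i)
    (hsort : sortPair (toMul α) (toMul β) = (toMul α', toMul β')) (i : Fin n) :
    (Even ((Finset.univ.filter fun j => Odd (α j + β j) ∧ i ≤ j).card) →
      (∑ k ∈ Finset.univ.filter (fun k => i ≤ k), α' k) =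
        (∑ k ∈ Finset.univ.filter (fun k => i ≤ k), β' k) ∧
      2 * (∑ k ∈ Finset.univ.filter (fun k => i ≤ k), α' k) =
        (∑ k ∈ Finset.univ.filter (fun k => i ≤ k), (α k + β k))) ∧
    (Odd ((Finset.univ.filter fun j => Odd (α j + β j) ∧ i ≤ j).card) →
      2 * (∑ k ∈ Finset.univ.filter (fun k => i ≤ k), α' k) + 1 =
        (∑ k ∈ Finset.univ.filter (fun k => i ≤ k), (α k + β k)) ∧
      2 * (∑ k ∈ Finset.univ.filter (fun k => i ≤ k), β' k) =
        (∑ k ∈ Finset.univ.filter (fun k => i ≤ k), (α k + β k)) + 1) := by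
  have tail_sum (γ : Fin n → ℕ) : (toMul γ).countP ((i : ℕ) ≤ ·) =
      ∑ k ∈ Finset.univ.filter (fun k => i ≤ k), γ k := countP_toMul _ γ
  set L := stdList (toMul α + toMul β)
  have hL : (L : Multiset ℕ) = toMul α + toMul β := Multiset.sort_eq _ _
  have hlen : Even L.length := by
    rw [← Multiset.coe_card, hL, Multiset.card_add, card_toMul, card_toMul, h]
    exact ⟨_, rfl⟩
  have htail : L.countP ((i : ℕ) ≤ ·) =
      ∑ k ∈ Finset.univ.filter (fun k => i ≤ k), (α k + β k) := by
    rw [← Multiset.coe_countP, hL, Multiset.countP_add, tail_sum, tail_sum,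
      Finset.sum_add_distrib]
  have hα' : ∑ k ∈ Finset.univ.filter (fun k => i ≤ k), α' k =
      (evens L).countP ((i : ℕ) ≤ ·) := by
    rw [← tail_sum, show toMul α' = evens L from congrArg Prod.fst hsort.symm,
      Multiset.coe_countP]
  have hβ' : ∑ k ∈ Finset.univ.filter (fun k => i ≤ k), β' k =
      (odds L).countP ((i : ℕ) ≤ ·) := by
    rw [← tail_sum, show toMul β' = odds L from congrArg Prod.snd hsort.symm,
      Multiset.coe_countP]
  have hparity : Even ((Finset.univ.filter fun j => Odd (α j + β j) ∧ i ≤ j).card) ↔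
      Even (L.countP ((i : ℕ) ≤ ·)) := by
    rw [htail, Finset.even_sum_iff_even_card_odd, Finset.filter_filter]
    simp only [and_comm]
  have hsorted : L.Pairwise (· ≤ ·) := Multiset.pairwise_sort _ _
  obtain ⟨hevens, hodds⟩ := countP_evens_odds_of_pairwise_le i hsorted hlen
  rw [hα', hβ', ← htail, hevens, hodds, ← Nat.not_even_iff_odd, hparity, Nat.even_iff]
  omega
end

section
/- Sufficiency (characterization of closure under comparability): let 1 ≤ d_1 ≤ ... ≤ d_s and for each i let M_i = B(w_i) be the principal strongly stable set of a monomial w_i of degree d_i, and suppose max(w_i) ≤ min(w_{i+1}) for 1 ≤ i ≤ s-1. Set M_0 = {X_1,...,X_n}. Then M = ⨆_{i=0}^s M_i is closed under comparability: for u ∈ M_k and v ∈ M_l with k < l, both components of ord(u,v) lie in M_k and M_l respectively, and for u, v ∈ M_i, both components of sort(u,v) lie in M_i. -/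
/-- `ord(u,v)` for `deg u ≤ deg v`. -/
def ordPair (u v : Multiset ℕ) : Multiset ℕ × Multiset ℕ :=
  ((((stdList (u + v)).drop (Multiset.card v) : List ℕ) : Multiset ℕ),
   (((stdList (u + v)).take (Multiset.card v) : List ℕ) : Multiset ℕ))

/-- Graded reverse-lex `u >_rev v` for equal-degree monomials. -/
def revGtM (u v : Multiset ℕ) : Prop :=
  ∃ k, (stdList u).getD k 0 < (stdList v).getD k 0 ∧
    ∀ k', k < k' → (stdList u).getD k' 0 = (stdList v).getD k' 0

/-- `memB w v` means `v ∈ B(w)`, the principal strongly stable set of `w`: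
the closure of `{w}` under replacing an occurring index `j` by some `i < j`. -/
inductive memB (w : Multiset ℕ) : Multiset ℕ → Prop
  | base : memB w w
  | step (v : Multiset ℕ) (i j : ℕ) (hij : i < j) (hj : j ∈ v) (hv : memB w v) :
      memB w (i ::ₘ v.erase j)

/-- The levels of `M`: `M_0 = {X_1,…,X_n}` (the singleton multisets `{a}`, `a < n`)
and `M_i = B(w_i)` for `i ≥ 1`. -/
def Mset (n : ℕ) (w : ℕ → Multiset ℕ) (i : ℕ) : Set (Multiset ℕ) :=
  if i = 0 then { m | ∃ a < n, m = ({a} : Multiset ℕ) } else { v | memB (w i) v }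

/-!
A monomial lies in `B(w)` exactly when it has the degree of `w` and, for every `t`, at most as
many factors of index `≥ t` as `w` (`memB_iff_tailCount_le`). Both `ord(u,v)` and `sort(u,v)` cut
the sorted word of `uv`, in which the factors of index `≥ t` form a final segment. Hence `sort`
gives each component half of that segment, rounded down or up, which is at most the tail count of
`w` when `u, v ∈ B(w)`. In `ord(u,v)` either the `v`-component misses the segment or the
`u`-component lies inside it; in the second case the tail count of the `u`-component is its
degree, and this is also the tail count of `w_k` once `w_l` has a factor of index `≥ t`, since
every index of `w_k` dominates every index of `w_l`.
-/

open Multiset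

def tailCount (t : ℕ) (m : Multiset ℕ) : ℕ := m.countP (t ≤ ·)

section TailCount

variable {v w : Multiset ℕ}

theorem tailCount_zero (m : Multiset ℕ) : tailCount 0 m = card m :=
  countP_eq_card.2 fun a _ => Nat.zero_le a

theorem tailCount_le_card (t : ℕ) (m : Multiset ℕ) : tailCount t m ≤ card m :=
  countP_le_card _ _

theorem tailCount_add (t : ℕ) (m m' : Multiset ℕ) :
    tailCount t (m + m') = tailCount t m + tailCount t m' :=
  countP_add _ _ _

theorem tailCount_cons_erase {i j : ℕ} (hj : j ∈ v) (t : ℕ) :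
    tailCount t (i ::ₘ v.erase j) + (if t ≤ j then 1 else 0) =
      tailCount t v + (if t ≤ i then 1 else 0) := by
  conv_rhs => rw [← cons_erase hj]
  simp only [tailCount, countP_cons]
  omega

theorem tailCount_succ_add_count (a : ℕ) (m : Multiset ℕ) :
    tailCount (a + 1) m + count a m = tailCount a m := by
  induction m using Multiset.induction with
  | empty => simp [tailCount]
  | cons b m ih =>
    simp only [tailCount, countP_cons, count_cons] at ih ⊢
    split_ifs <;> omega

theorem eq_of_tailCount_eq (h : ∀ t, tailCount t v = tailCount t w) : v = w := by
  ext a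
  have := tailCount_succ_add_count a v
  have := tailCount_succ_add_count a w
  have := h a
  have := h (a + 1)
  omega

theorem sum_eq_sum_range_tailCount {B : ℕ} {m : Multiset ℕ} (h : ∀ a ∈ m, a < B) :
    m.sum = ∑ t ∈ Finset.range B, tailCount (t + 1) m := by
  induction m using Multiset.induction with
  | empty => simp [tailCount]
  | cons b m ih =>
    have hb : ∑ t ∈ Finset.range B, (if t + 1 ≤ b then 1 else 0) = b := by
      have hb : b < B := h b (mem_cons_self b m)
      have hfilter : (Finset.range B).filter (· + 1 ≤ b) = Finset.range b := by
        ext t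
        simp only [Finset.mem_filter, Finset.mem_range]
        omega
      rw [Finset.sum_boole, Nat.cast_id, hfilter, Finset.card_range]
    simp only [tailCount, countP_cons, Finset.sum_add_distrib, sum_cons] at ih ⊢
    rw [ih fun a ha => h a (mem_cons_of_mem ha), hb, add_comm]

theorem sum_le_sum_of_tailCount_le (h : ∀ t, tailCount t v ≤ tailCount t w) :
    v.sum ≤ w.sum := by
  obtain ⟨B, hB⟩ : ∃ B, v.sum + w.sum < B := ⟨_, lt_add_one _⟩
  have hv : ∀ a ∈ v, a < B := fun a ha => by have := le_sum_of_mem ha; omega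
  have hw : ∀ a ∈ w, a < B := fun a ha => by have := le_sum_of_mem ha; omega
  rw [sum_eq_sum_range_tailCount hv, sum_eq_sum_range_tailCount hw]
  exact Finset.sum_le_sum fun t _ => h (t + 1)

end TailCount

namespace memB

variable {v w : Multiset ℕ}

theorem card_eq (h : memB w v) : card v = card w := by
  induction h with
  | base => rfl
  | step v i j _ hj _ ih => rw [card_cons, card_erase_add_one hj, ih]

theorem tailCount_le (h : memB w v) (t : ℕ) : tailCount t v ≤ tailCount t w := by
  induction h with
  | base => exact le_rfl
  | step v i j hij hj _ ih =>
    have := tailCount_cons_erase (i := i) hj t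
    split_ifs at this <;> omega

theorem forall_lt {n : ℕ} (h : memB w v) (hw : ∀ a ∈ w, a < n) :
    ∀ a ∈ v, a < n := by
  intro a ha
  by_contra! hna
  obtain ⟨b, hb, hnb⟩ := countP_pos.1 ((countP_pos.2 ⟨a, ha, hna⟩).trans_le (h.tailCount_le n))
  exact (hw b hb).not_ge hnb

end memB

/-- The least `t` at which the tail of `v` falls short is `i + 1` with `i ∈ v`; raising that
factor to `i + 1` only enlarges the tail at `i + 1`. -/
theorem exists_raise_tailCount_le {v w : Multiset ℕ} (hc : card v = card w)
    (h : ∀ t, tailCount t v ≤ tailCount t w) (hne : v ≠ w) :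
    ∃ i ∈ v, ∀ t, tailCount t ((i + 1) ::ₘ v.erase i) ≤ tailCount t w := by
  classical
  have hex : ∃ t, tailCount t v < tailCount t w := by
    by_contra! hge
    exact hne (eq_of_tailCount_eq fun t => (h t).antisymm (hge t))
  obtain ⟨i, hi⟩ : ∃ i, Nat.find hex = i + 1 := by
    refine Nat.exists_eq_add_one.2 (Nat.pos_of_ne_zero fun h0 => ?_)
    have := Nat.find_spec hex
    rw [h0, tailCount_zero, tailCount_zero, hc] at this
    exact lt_irrefl _ this
  have hlt : tailCount (i + 1) v < tailCount (i + 1) w := hi ▸ Nat.find_spec hex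
  have heq : tailCount i v = tailCount i w :=
    (h i).antisymm (not_lt.1 (Nat.find_min hex (by omega)))
  have hmem : i ∈ v := by
    have := tailCount_succ_add_count i v
    have := tailCount_succ_add_count i w
    exact count_pos.1 (by omega)
  refine ⟨i, hmem, fun t => ?_⟩
  have hraise := tailCount_cons_erase (i := i + 1) hmem t
  obtain rfl | ht := eq_or_ne t (i + 1)
  · simp only [le_refl, if_true, show ¬ i + 1 ≤ i by omega, if_false] at hraise
    omega
  · have := h t
    split_ifs at hraise <;> omega

theorem memB_of_tailCount_le {v w : Multiset ℕ} (hc : card v = card w)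
    (h : ∀ t, tailCount t v ≤ tailCount t w) : memB w v := by
  by_cases hne : v = w
  · exact hne ▸ memB.base
  obtain ⟨i, hi, hraise⟩ := exists_raise_tailCount_le hc h hne
  have hsum : v.sum + 1 = ((i + 1) ::ₘ v.erase i).sum := by
    rw [sum_cons, ← sum_erase hi]
    omega
  have := sum_le_sum_of_tailCount_le hraise
  have hc' : card ((i + 1) ::ₘ v.erase i) = card w := by rw [card_cons, card_erase_add_one hi, hc]
  have ih := memB_of_tailCount_le hc' hraise
  simpa only [erase_cons_head, cons_erase hi] using
    memB.step _ i (i + 1) i.lt_add_one (mem_cons_self _ _) ih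
termination_by w.sum - v.sum
decreasing_by simp only [sum_cons] at *; omega

theorem memB_iff_tailCount_le {v w : Multiset ℕ} :
    memB w v ↔ card v = card w ∧ ∀ t, tailCount t v ≤ tailCount t w :=
  ⟨fun h => ⟨h.card_eq, h.tailCount_le⟩, fun h => memB_of_tailCount_le h.1 h.2⟩

section OrdPair

variable {u v w w' : Multiset ℕ}

theorem ordPair_fst_add_snd (u v : Multiset ℕ) : (ordPair u v).1 + (ordPair u v).2 = u + v := by
  rw [ordPair, add_comm, coe_add, List.take_append_drop, stdList, sort_eq]

theorem card_ordPair_snd (u v : Multiset ℕ) : card (ordPair u v).2 = card v := by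
  have := congrArg card (sort_eq (u + v) (· ≤ ·))
  simp only [coe_card, card_add] at this
  simp only [ordPair, stdList, coe_card, List.length_take, this]
  omega

theorem card_ordPair_fst (u v : Multiset ℕ) : card (ordPair u v).1 = card u := by
  have := congrArg card (ordPair_fst_add_snd u v)
  rw [card_add, card_add, card_ordPair_snd] at this
  omega

theorem tailCount_ordPair_snd_eq_zero_or (u v : Multiset ℕ) (t : ℕ) :
    tailCount t (ordPair u v).2 = 0 ∨ tailCount t (ordPair u v).1 = card u := by
  rw [or_iff_not_imp_left, ← card_ordPair_fst u v]
  intro hpos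
  refine countP_eq_card.2 fun y hy => ?_
  obtain ⟨x, hx, htx⟩ := countP_pos.1 (Nat.pos_of_ne_zero hpos)
  have hsorted : ((stdList (u + v)).take (card v) ++ (stdList (u + v)).drop (card v)).Pairwise
      (· ≤ ·) := by
    rw [List.take_append_drop]
    exact pairwise_sort _ _
  exact htx.trans ((List.pairwise_append.1 hsorted).2.2 x hx y hy)

theorem memB_ordPair_snd (hv : memB w v) (u : Multiset ℕ) : memB w (ordPair u v).2 := by
  rw [memB_iff_tailCount_le] at hv ⊢
  refine ⟨(card_ordPair_snd u v).trans hv.1, fun t => ?_⟩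
  have hsplit := congrArg (tailCount t) (ordPair_fst_add_snd u v)
  rw [tailCount_add, tailCount_add] at hsplit
  have := tailCount_le_card t u
  have := hv.2 t
  rcases tailCount_ordPair_snd_eq_zero_or u v t with h | h <;> omega

theorem memB_ordPair_fst (hu : memB w' u) (hv : memB w v) (hww' : ∀ b ∈ w, ∀ a ∈ w', b ≤ a) :
    memB w' (ordPair u v).1 := by
  rw [memB_iff_tailCount_le] at hu hv ⊢
  refine ⟨(card_ordPair_fst u v).trans hu.1, fun t => ?_⟩
  rcases Nat.eq_zero_or_pos (tailCount t v) with hv0 | hvpos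
  · have hsplit := congrArg (tailCount t) (ordPair_fst_add_snd u v)
    rw [tailCount_add, tailCount_add] at hsplit
    have := hu.2 t
    omega
  · obtain ⟨b, hb, htb⟩ := countP_pos.1 (hvpos.trans_le (hv.2 t))
    have hw' : tailCount t w' = card w' := countP_eq_card.2 fun a ha => htb.trans (hww' b hb a ha)
    rw [hw', ← hu.1, ← card_ordPair_fst u v]
    exact tailCount_le_card t _

end OrdPair

section SortPair

theorem map_snd_filter_parity_zipIdx_add_two (r n : ℕ) (l : List ℕ) :
    (((l.zipIdx (n + 2)).map Prod.swap).filter fun p => p.1 % 2 == r).map Prod.snd =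
      (((l.zipIdx n).map Prod.swap).filter fun p => p.1 % 2 == r).map Prod.snd := by
  induction l generalizing n with
  | nil => rfl
  | cons a l ih =>
    simp only [List.zipIdx_cons, List.map_cons, Prod.swap, List.filter_cons, Nat.add_mod_right,
      show n + 2 + 1 = n + 1 + 2 by omega]
    split_ifs <;> simp [ih]

theorem evens_cons_cons (a b : ℕ) (l : List ℕ) : evens (a :: b :: l) = a :: evens l := by
  simp [evens, map_snd_filter_parity_zipIdx_add_two]

theorem odds_cons_cons (a b : ℕ) (l : List ℕ) : odds (a :: b :: l) = b :: odds l := by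
  simp [odds, map_snd_filter_parity_zipIdx_add_two]

theorem evens_append_odds_perm : ∀ l : List ℕ, (evens l ++ odds l).Perm l
  | [] => by simp [evens, odds]
  | [a] => by simp [evens, odds]
  | a :: b :: l => by
    rw [evens_cons_cons, odds_cons_cons, List.cons_append]
    exact ((evens_append_odds_perm l).cons b |> List.perm_middle.trans).cons a

theorem tailCount_evens_of_pairwise (t : ℕ) : ∀ l : List ℕ, l.Pairwise (· ≤ ·) →
    Even l.length → tailCount t (evens l : Multiset ℕ) = tailCount t (l : Multiset ℕ) / 2
  | [], _, _ => by simp [evens, tailCount]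
  | [_], _, hl => by simp at hl
  | a :: b :: l, hsort, hlen => by
    obtain ⟨hab, hbl⟩ : a ≤ b ∧ ∀ x ∈ l, b ≤ x := by
      simp only [List.pairwise_cons, List.mem_cons] at hsort
      exact ⟨hsort.1 b (Or.inl rfl), hsort.2.1⟩
    obtain ⟨k, hk⟩ : Even l.length := by simpa [parity_simps] using hlen
    have ih := tailCount_evens_of_pairwise t l hsort.of_cons.of_cons ⟨k, hk⟩
    rw [evens_cons_cons]
    simp only [tailCount, ← cons_coe, countP_cons] at ih ⊢
    by_cases hta : t ≤ a
    · simp only [hta, hta.trans hab, if_true]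
      omega
    by_cases htb : t ≤ b
    · have hall : countP (t ≤ ·) (l : Multiset ℕ) = l.length :=
        countP_eq_card.2 fun x hx => htb.trans (hbl x hx)
      simp only [hta, htb, if_true, if_false, hall] at ih ⊢
      omega
    · simp only [hta, htb, if_false]
      omega

variable {u v w : Multiset ℕ}

theorem sortPair_fst_add_snd (u v : Multiset ℕ) : (sortPair u v).1 + (sortPair u v).2 = u + v := by
  rw [sortPair, coe_add, coe_eq_coe.2 (evens_append_odds_perm _), stdList, sort_eq]

theorem tailCount_sortPair_fst (h : card u = card v) (t : ℕ) :
    tailCount t (sortPair u v).1 = tailCount t (u + v) / 2 := by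
  have hlen : Even (stdList (u + v)).length := by
    rw [← coe_card, stdList, sort_eq, card_add, h]
    exact ⟨card v, rfl⟩
  show tailCount t (evens (stdList (u + v)) : Multiset ℕ) = _
  rw [tailCount_evens_of_pairwise t (stdList (u + v)) (pairwise_sort _ _) hlen, stdList, sort_eq]

theorem tailCount_sortPair_snd (h : card u = card v) (t : ℕ) :
    tailCount t (sortPair u v).2 = (tailCount t (u + v) + 1) / 2 := by
  have := congrArg (tailCount t) (sortPair_fst_add_snd u v)
  rw [tailCount_add, tailCount_sortPair_fst h] at this
  omega

theorem memB_sortPair (hu : memB w u) (hv : memB w v) :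
    memB w (sortPair u v).1 ∧ memB w (sortPair u v).2 := by
  rw [memB_iff_tailCount_le] at hu hv
  have hc : card u = card v := hu.1.trans hv.1.symm
  have hcard : card (u + v) = 2 * card w := by rw [card_add, hu.1, hv.1, two_mul]
  have hbound : ∀ t, tailCount t (u + v) ≤ 2 * tailCount t w := fun t => by
    have := hu.2 t
    have := hv.2 t
    rw [tailCount_add]
    omega
  refine ⟨memB_of_tailCount_le ?_ fun t => ?_, memB_of_tailCount_le ?_ fun t => ?_⟩
  · rw [← tailCount_zero, tailCount_sortPair_fst hc, tailCount_zero, hcard]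
    omega
  · rw [tailCount_sortPair_fst hc]
    have := hbound t
    omega
  · rw [← tailCount_zero, tailCount_sortPair_snd hc, tailCount_zero, hcard]
    omega
  · rw [tailCount_sortPair_snd hc]
    have := hbound t
    omega

end SortPair

theorem forall_mem_le_of_chain {s : ℕ} {w : ℕ → Multiset ℕ} (hne : ∀ i, 1 ≤ i → i ≤ s → w i ≠ 0)
    (hchain : ∀ i, 1 ≤ i → i < s → ∀ a ∈ w i, ∀ b ∈ w (i + 1), b ≤ a)
    {k l : ℕ} (hk : 1 ≤ k) (hkl : k < l) (hls : l ≤ s) : ∀ b ∈ w l, ∀ a ∈ w k, b ≤ a := by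
  induction l, hkl using Nat.le_induction with
  | base => exact fun b hb a ha => hchain k hk (by omega) a ha b hb
  | succ l hkl ih =>
    obtain ⟨c, hc⟩ := exists_mem_of_ne_zero (hne l (by omega) (by omega))
    exact fun b hb a ha =>
      (hchain l (by omega) (by omega) c hc b hb).trans (ih (by omega) c hc a ha)

section Mset

variable {n i : ℕ} {w : ℕ → Multiset ℕ} {m u v : Multiset ℕ}

theorem mem_Mset_zero : m ∈ Mset n w 0 ↔ card m = 1 ∧ ∀ a ∈ m, a < n := by
  simp only [Mset, card_eq_one]
  constructor
  · rintro ⟨a, ha, rfl⟩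
    exact ⟨⟨a, rfl⟩, by simpa using ha⟩
  · rintro ⟨⟨a, rfl⟩, h⟩
    exact ⟨a, h a (mem_singleton_self a), rfl⟩

theorem mem_Mset_of_ne_zero (hi : i ≠ 0) : m ∈ Mset n w i ↔ memB (w i) m := by
  simp [Mset, hi]

theorem ordPair_fst_mem_Mset_zero (hu : u ∈ Mset n w 0) (hv : ∀ a ∈ v, a < n) :
    (ordPair u v).1 ∈ Mset n w 0 := by
  rw [mem_Mset_zero] at hu ⊢
  refine ⟨(card_ordPair_fst u v).trans hu.1, fun a ha => ?_⟩
  have : a ∈ u + v := ordPair_fst_add_snd u v ▸ mem_add.2 (Or.inl ha)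
  exact (mem_add.1 this).elim (hu.2 a) (hv a)

theorem sortPair_mem_Mset_zero (hu : u ∈ Mset n w 0) (hv : v ∈ Mset n w 0) :
    (sortPair u v).1 ∈ Mset n w 0 ∧ (sortPair u v).2 ∈ Mset n w 0 := by
  simp only [mem_Mset_zero] at hu hv ⊢
  have hc : card u = card v := hu.1.trans hv.1.symm
  have hlt : ∀ a ∈ (sortPair u v).1 + (sortPair u v).2, a < n := by
    rw [sortPair_fst_add_snd]
    exact fun a ha => (mem_add.1 ha).elim (hu.2 a) (hv.2 a)
  refine ⟨⟨?_, fun a ha => hlt a (mem_add.2 (Or.inl ha))⟩,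
    ⟨?_, fun a ha => hlt a (mem_add.2 (Or.inr ha))⟩⟩
  · rw [← tailCount_zero, tailCount_sortPair_fst hc, tailCount_zero, card_add, hu.1, hv.1]
  · rw [← tailCount_zero, tailCount_sortPair_snd hc, tailCount_zero, card_add, hu.1, hv.1]

end Mset

theorem sufficiency_closed_under_comparability_general (n s : ℕ) (d : ℕ → ℕ) (w : ℕ → Multiset ℕ)
    (hd1 : 1 ≤ d 1)
    (hdmono : ∀ i, 1 ≤ i → i < s → d i ≤ d (i + 1))
    (hcard : ∀ i, 1 ≤ i → i ≤ s → Multiset.card (w i) = d i)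
    (hvars : ∀ i, 1 ≤ i → i ≤ s → ∀ a ∈ w i, a < n)
    (hchain : ∀ i, 1 ≤ i → i < s → ∀ a ∈ w i, ∀ b ∈ w (i + 1), b ≤ a) :
    (∀ k l, k < l → l ≤ s → ∀ u ∈ Mset n w k, ∀ v ∈ Mset n w l,
      (ordPair u v).1 ∈ Mset n w k ∧ (ordPair u v).2 ∈ Mset n w l) ∧
    (∀ i ≤ s, ∀ u ∈ Mset n w i, ∀ v ∈ Mset n w i,
      (sortPair u v).1 ∈ Mset n w i ∧ (sortPair u v).2 ∈ Mset n w i) := by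
  have hne : ∀ i, 1 ≤ i → i ≤ s → w i ≠ 0 := by
    intro i hi his
    rw [← card_pos, hcard i hi his]
    induction i, hi using Nat.le_induction with
    | base => exact hd1
    | succ i hi ih => exact (ih (by omega)).trans_le (hdmono i hi (by omega))
  refine ⟨fun k l hkl hls u hu v hv => ?_, fun i _ u hu v hv => ?_⟩
  · have hl : l ≠ 0 := by omega
    rw [mem_Mset_of_ne_zero hl] at hv ⊢
    refine ⟨?_, memB_ordPair_snd hv u⟩
    rcases Nat.eq_zero_or_pos k with rfl | hk
    · exact ordPair_fst_mem_Mset_zero hu (hv.forall_lt (hvars l (by omega) hls))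
    · rw [mem_Mset_of_ne_zero hk.ne'] at hu ⊢
      exact memB_ordPair_fst hu hv (forall_mem_le_of_chain hne hchain hk hkl hls)
  · rcases Nat.eq_zero_or_pos i with rfl | hi
    · exact sortPair_mem_Mset_zero hu hv
    · simp only [mem_Mset_of_ne_zero hi.ne'] at hu hv ⊢
      exact memB_sortPair hu hv

/-- sufficiency: let `1 ≤ d_1 ≤ ⋯ ≤ d_s`, `M_i = B(w_i)` with
`deg w_i = d_i`, and `max(w_i) ≤ min(w_{i+1})` for `1 ≤ i ≤ s-1` (in index terms:
every index of `w_{i+1}` is ≤ every index of `w_i`); set `M_0 = {X_1,…,X_n}`.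
Then `M = ⨆_{i=0}^s M_i` is closed under comparability: for `u ∈ M_k`, `v ∈ M_l`
with `k < l` both components of `ord(u,v)` lie in `M_k` and `M_l` respectively,
and for `u, v ∈ M_i` both components of `sort(u,v)` lie in `M_i`. -/
theorem sufficiency_closed_under_comparability (n s : ℕ) (d : ℕ → ℕ) (w : ℕ → Multiset ℕ)
    (hd0 : d 0 = 1) (hd1 : 1 ≤ d 1)
    (hdmono : ∀ i, 1 ≤ i → i < s → d i ≤ d (i + 1))
    (hcard : ∀ i, 1 ≤ i → i ≤ s → Multiset.card (w i) = d i)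
    (hvars : ∀ i, 1 ≤ i → i ≤ s → ∀ a ∈ w i, a < n)
    (hchain : ∀ i, 1 ≤ i → i < s → ∀ a ∈ w i, ∀ b ∈ w (i + 1), b ≤ a) :
    (∀ k l, k < l → l ≤ s → ∀ u ∈ Mset n w k, ∀ v ∈ Mset n w l,
      (ordPair u v).1 ∈ Mset n w k ∧ (ordPair u v).2 ∈ Mset n w l) ∧
    (∀ i ≤ s, ∀ u ∈ Mset n w i, ∀ v ∈ Mset n w i,
      (sortPair u v).1 ∈ Mset n w i ∧ (sortPair u v).2 ∈ Mset n w i) :=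
  sufficiency_closed_under_comparability_general n s d w hd1 hdmono hcard hvars hchain
end
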